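/- Let α ∈ (0,2) and set C = (sup_{u ∈ [0,1]} |ψ''(u)|)/(2−α) + 2/α. Then for all integers n ≥ 2, all integers m with 2 ≤ m ≤ n, and all x ∈ ℝ, one has |D^α f_n(x)| ≤ C · f_{n−m}(x) + 2/(α (m−1)^α). -/

import Mathlib

open MeasureTheory Real Filter

/-- The fractional Laplacian of order `α`. -/
noncomputable def Dalpha (α : ℝ) (f : ℝ → ℝ) (x : ℝ) : ℝ :=
  ∫ h : ℝ, (f (x + h) - f x - (if |h| ≤ 1 then deriv f x * h else 0)) / |h| ^ (1 + α)

/-- The smoothing polynomial `ψ(u) = 6u⁵ − 15u⁴ + 10u³`. -/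
noncomputable def psi (u : ℝ) : ℝ := 6 * u ^ 5 - 15 * u ^ 4 + 10 * u ^ 3

/-- The cut-off functions `f_n(x) = ψ(min(max(|x| − (n−1), 0), 1))` for `n ≥ 1`, and
`f_0 ≡ 1`. -/
noncomputable def fn : ℕ → ℝ → ℝ
  | 0, _ => 1
  | n + 1, x => psi (min (max (|x| - (n : ℝ)) 0) 1)

open Set
open scoped NNReal Topology

/-!
If `f_{n-m}(x) = 1`, bound the integrand for `|h| ≤ 1` by the Taylor remainder
`sup |ψ''| h² / 2` and for `|h| > 1` by the oscillation `1` of `f_n`; integrating `|h|^(1-α)`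
and `|h|^(-1-α)` gives `C`. Otherwise `|x| < n - m`, so `f_n` vanishes within distance `m - 1`
of `x`, only `|h| > m - 1` contributes, and that tail integral is `2 / (α (m-1)^α)`. The Taylor
bound needs `f_n` twice differentiable with `|f_n''| ≤ sup |ψ''|`: the corners of the clamp and
of `|x|` do no harm because `ψ'` and `ψ''` vanish at `0` and `1`.
-/

noncomputable def psi' (u : ℝ) : ℝ := 30 * u ^ 4 - 60 * u ^ 3 + 30 * u ^ 2

noncomputable def psi'' (u : ℝ) : ℝ := 120 * u ^ 3 - 180 * u ^ 2 + 60 * u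

theorem hasDerivAt_psi (t : ℝ) : HasDerivAt psi (psi' t) t := by
  refine ((((hasDerivAt_pow 5 t).const_mul 6).sub ((hasDerivAt_pow 4 t).const_mul 15)).add
    ((hasDerivAt_pow 3 t).const_mul 10)).congr_deriv ?_
  norm_num [psi']
  ring

theorem hasDerivAt_psi' (t : ℝ) : HasDerivAt psi' (psi'' t) t := by
  refine ((((hasDerivAt_pow 4 t).const_mul 30).sub ((hasDerivAt_pow 3 t).const_mul 60)).add
    ((hasDerivAt_pow 2 t).const_mul 30)).congr_deriv ?_
  norm_num [psi'']
  ring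

theorem deriv_deriv_psi : deriv (deriv psi) = psi'' := by
  have h : deriv psi = psi' := funext fun t => (hasDerivAt_psi t).deriv
  exact h ▸ funext fun t => (hasDerivAt_psi' t).deriv

theorem psi_mem_Icc {u : ℝ} (hu : u ∈ Icc (0 : ℝ) 1) : psi u ∈ Icc (0 : ℝ) 1 := by
  obtain ⟨h0, h1⟩ := hu
  -- `ψ(u) = u³ (6u² − 15u + 10)` and `1 − ψ(u) = (1 − u)³ (6u² + 3u + 1)`
  constructor <;> simp only [psi] <;>
    nlinarith [pow_nonneg h0 3, pow_nonneg (sub_nonneg.2 h1) 3, sq_nonneg u, sq_nonneg (u - 1)]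

theorem abs_psi''_le_iSup {u : ℝ} (hu : u ∈ Icc (0 : ℝ) 1) :
    |psi'' u| ≤ ⨆ v : Icc (0 : ℝ) 1, |deriv (deriv psi) (v : ℝ)| := by
  rw [deriv_deriv_psi]
  have hbdd : BddAbove (range fun v : Icc (0 : ℝ) 1 => |psi'' v|) := by
    refine ((isCompact_Icc (a := (0 : ℝ)) (b := 1)).image (f := fun v => |psi'' v|)
      (by unfold psi''; fun_prop)).bddAbove.mono ?_
    rintro _ ⟨v, rfl⟩
    exact ⟨v, v.2, rfl⟩
  exact le_ciSup hbdd ⟨u, hu⟩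

noncomputable def clampUnit (t : ℝ) : ℝ := min (max t 0) 1

theorem clampUnit_mem_Icc (t : ℝ) : clampUnit t ∈ Icc (0 : ℝ) 1 :=
  ⟨le_min (le_max_right _ _) zero_le_one, min_le_right _ _⟩

theorem clampUnit_of_nonpos {t : ℝ} (h : t ≤ 0) : clampUnit t = 0 := by
  simp [clampUnit, max_eq_right h]

theorem clampUnit_of_one_le {t : ℝ} (h : 1 ≤ t) : clampUnit t = 1 := by
  simp [clampUnit, max_eq_left (zero_le_one.trans h), h]

theorem clampUnit_of_mem_Icc {t : ℝ} (h : t ∈ Icc (0 : ℝ) 1) : clampUnit t = t := by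
  simp [clampUnit, max_eq_left h.1, h.2]

theorem lipschitzWith_clampUnit : LipschitzWith 1 clampUnit :=
  (LipschitzWith.id.max_const 0).min_const 1

/-- No differentiability of `g` is needed: this absorbs the corners of `clampUnit`. -/
theorem HasDerivAt.zero_comp_lipschitzWith {p g : ℝ → ℝ} {K : ℝ≥0} {t : ℝ}
    (hp : HasDerivAt p 0 (g t)) (hg : LipschitzWith K g) :
    HasDerivAt (fun s => p (g s)) 0 t := by
  rw [hasDerivAt_iff_isLittleO] at hp ⊢
  have hgO : (fun s => g s - g t) =O[𝓝 t] fun s => s - t :=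
    Asymptotics.IsBigO.of_bound K (Eventually.of_forall fun s => by
      simpa [Real.dist_eq] using hg.dist_le_mul s t)
  simpa [Function.comp_def] using (hp.comp_tendsto (hg.continuous.tendsto t)).trans_isBigO hgO

theorem hasDerivAt_comp_clampUnit {p q : ℝ → ℝ} (hp : ∀ t, HasDerivAt p (q t) t)
    (hq0 : q 0 = 0) (hq1 : q 1 = 0) (t : ℝ) :
    HasDerivAt (fun s => p (clampUnit s)) (q (clampUnit t)) t := by
  by_cases ht : t ∈ Ioo 0 1
  · rw [clampUnit_of_mem_Icc (Ioo_subset_Icc_self ht)]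
    refine (hp t).congr_of_eventuallyEq ?_
    filter_upwards [Ioo_mem_nhds ht.1 ht.2] with s hs
    rw [clampUnit_of_mem_Icc (Ioo_subset_Icc_self hs)]
  · have hq : q (clampUnit t) = 0 := by
      rw [mem_Ioo, not_and_or, not_lt, not_lt] at ht
      rcases ht with ht | ht
      · rwa [clampUnit_of_nonpos ht]
      · rwa [clampUnit_of_one_le ht]
    rw [hq]
    exact (hq ▸ hp (clampUnit t)).zero_comp_lipschitzWith lipschitzWith_clampUnit

section Radial

variable {P P' P'' : ℝ → ℝ} {c : ℝ}

theorem comp_abs_sub_eq_add (hP : ∀ t ≤ 0, P t = 0) (hc : 0 ≤ c) (x : ℝ) :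
    P (|x| - c) = P (x - c) + P (-c - x) := by
  rcases le_total 0 x with hx | hx
  · rw [abs_of_nonneg hx, hP (-c - x) (by linarith), add_zero]
  · rw [abs_of_nonpos hx, hP (x - c) (by linarith), zero_add, neg_sub_comm]

/-- The corner of `|·|` is invisible: `P (|y| - c) = P (y - c) + P (-c - y)`. -/
theorem exists_hasDerivAt_comp_abs_sub (hc : 0 ≤ c) (hP : ∀ t, HasDerivAt P (P' t) t)
    (hP' : ∀ t, HasDerivAt P' (P'' t) t) (hP0 : ∀ t ≤ 0, P t = 0)
    (hP''0 : ∀ t ≤ 0, P'' t = 0) :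
    ∃ f' : ℝ → ℝ, (∀ x, HasDerivAt (fun y => P (|y| - c)) (f' x) x) ∧
      ∀ x, HasDerivAt f' (P'' (|x| - c)) x := by
  refine ⟨fun y => P' (y - c) - P' (-c - y), fun x => ?_, fun x => ?_⟩
  · show HasDerivAt _ (P' (x - c) - P' (-c - x)) x
    rw [show (fun y => P (|y| - c)) = fun y => P (y - c) + P (-c - y) from
      funext (comp_abs_sub_eq_add hP0 hc), sub_eq_add_neg]
    exact ((hP _).comp_sub_const x c).add ((hP _).comp_const_sub (-c) x)
  · rw [comp_abs_sub_eq_add hP''0 hc, ← sub_neg_eq_add]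
    exact ((hP' _).comp_sub_const x c).sub ((hP' _).comp_const_sub (-c) x)

end Radial

theorem exists_hasDerivAt_fn_succ (k : ℕ) {M : ℝ}
    (hM : ∀ u ∈ Icc (0 : ℝ) 1, |psi'' u| ≤ M) :
    ∃ f' f'' : ℝ → ℝ, (∀ x, HasDerivAt (fn (k + 1)) (f' x) x) ∧
      (∀ x, HasDerivAt f' (f'' x) x) ∧ ∀ x, |f'' x| ≤ M := by
  have hP := hasDerivAt_comp_clampUnit hasDerivAt_psi (by simp [psi']) (by norm_num [psi'])
  have hP' := hasDerivAt_comp_clampUnit hasDerivAt_psi' (by simp [psi'']) (by norm_num [psi''])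
  obtain ⟨f', hf, hf'⟩ := exists_hasDerivAt_comp_abs_sub (Nat.cast_nonneg k) hP hP'
    (fun t ht => by simp [clampUnit_of_nonpos ht, psi])
    (fun t ht => by simp [clampUnit_of_nonpos ht, psi''])
  exact ⟨f', _, hf, hf', fun x => hM _ (clampUnit_mem_Icc _)⟩

theorem fn_mem_Icc (n : ℕ) (x : ℝ) : fn n x ∈ Icc (0 : ℝ) 1 := by
  cases n with
  | zero => exact ⟨zero_le_one, le_rfl⟩
  | succ k => exact psi_mem_Icc (clampUnit_mem_Icc _)

theorem fn_eq_one_of_le_abs {n : ℕ} {x : ℝ} (hx : (n : ℝ) ≤ |x|) : fn n x = 1 := by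
  cases n with
  | zero => rfl
  | succ k =>
    change psi (clampUnit _) = 1
    rw [clampUnit_of_one_le (by push_cast at hx; linarith)]
    norm_num [psi]

theorem fn_succ_eq_zero_of_abs_le {k : ℕ} {x : ℝ} (hx : |x| ≤ k) : fn (k + 1) x = 0 := by
  change psi (clampUnit _) = 0
  rw [clampUnit_of_nonpos (by linarith)]
  norm_num [psi]

theorem abs_sub_sub_mul_le_of_deriv_deriv_of_nonneg {f f' f'' : ℝ → ℝ} {M : ℝ}
    (hf : ∀ y, HasDerivAt f (f' y) y) (hf' : ∀ y, HasDerivAt f' (f'' y) y)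
    (hM : ∀ y, |f'' y| ≤ M) (x : ℝ) {h : ℝ} (hh : 0 ≤ h) :
    |f (x + h) - f x - f' x * h| ≤ M / 2 * h ^ 2 := by
  have hlip : ∀ t, |f' (x + t) - f' x| ≤ M * |t| := fun t => by
    simpa using Convex.norm_image_sub_le_of_norm_hasDerivWithin_le
      (fun y _ => (hf' y).hasDerivWithinAt) (fun y _ => hM y) convex_univ (mem_univ x)
      (mem_univ (x + t))
  have hφ : ∀ t, HasDerivAt (fun t => f (x + t) - f x - f' x * t) (f' (x + t) - f' x) t := by
    intro t
    exact ((((hf (x + t)).comp_const_add x t).sub_const (f x)).sub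
      ((hasDerivAt_id' t).const_mul (f' x))).congr_deriv (by rw [mul_one])
  have hB : ∀ t, HasDerivAt (fun t => M / 2 * t ^ 2) (M * t) t := fun t =>
    ((hasDerivAt_pow 2 t).const_mul (M / 2)).congr_deriv (by push_cast; ring)
  refine image_norm_le_of_norm_deriv_right_le_deriv_boundary
    (f := fun t => f (x + t) - f x - f' x * t)
    (fun t _ => (hφ t).continuousAt.continuousWithinAt) (fun t _ => (hφ t).hasDerivWithinAt)
    (by simp) hB (fun t ht => ?_) ⟨hh, le_rfl⟩
  simpa [abs_of_nonneg ht.1] using hlip t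

theorem abs_sub_sub_mul_le_of_deriv_deriv {f f' f'' : ℝ → ℝ} {M : ℝ}
    (hf : ∀ y, HasDerivAt f (f' y) y) (hf' : ∀ y, HasDerivAt f' (f'' y) y)
    (hM : ∀ y, |f'' y| ≤ M) (x h : ℝ) :
    |f (x + h) - f x - f' x * h| ≤ M / 2 * h ^ 2 := by
  rcases le_total 0 h with hh | hh
  · exact abs_sub_sub_mul_le_of_deriv_deriv_of_nonneg hf hf' hM x hh
  -- apply the case `h ≥ 0` to `y ↦ f (-y)`
  have hg : ∀ y, HasDerivAt (fun y => f (-y)) (-f' (-y)) y := fun y =>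
    ((hf (-y)).comp y (hasDerivAt_neg' y)).congr_deriv (by ring)
  have hg' : ∀ y, HasDerivAt (fun y => -f' (-y)) (f'' (-y)) y := fun y =>
    ((hf' (-y)).comp y (hasDerivAt_neg' y)).neg.congr_deriv (by ring)
  have := abs_sub_sub_mul_le_of_deriv_deriv_of_nonneg hg hg' (fun y => hM (-y)) (-x)
    (neg_nonneg.2 hh)
  simp only [neg_add_rev, neg_neg, neg_sq] at this
  convert this using 3 <;> ring_nf

theorem integrable_comp_abs {G : ℝ → ℝ} (hG : IntegrableOn G (Ioi 0)) :
    Integrable (fun x => G |x|) := by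
  have hIoi : IntegrableOn (fun x => G |x|) (Ioi 0) :=
    hG.congr_fun (fun x hx => by rw [abs_of_pos hx]) measurableSet_Ioi
  have hIic : IntegrableOn (fun x => G |x|) (Iic 0) := by
    have hneg : MeasurableEmbedding fun x : ℝ => -x := (Homeomorph.neg ℝ).measurableEmbedding
    rw [← Measure.map_neg_eq_self (volume : Measure ℝ), hneg.integrableOn_map_iff]
    simp_rw [Function.comp_def, abs_neg, neg_preimage, neg_Iic, neg_zero]
    exact Iff.mpr integrableOn_Ici_iff_integrableOn_Ioi hIoi
  rw [← integrableOn_univ, ← Iic_union_Ioi (a := 0)]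
  exact hIic.union hIoi

theorem abs_integral_le_of_abs_le_ite {g A B : ℝ → ℝ} {r : ℝ} (hr : 0 ≤ r)
    (hA : IntegrableOn A (Ioc 0 r)) (hB : IntegrableOn B (Ioi r))
    (hg : ∀ h, |g h| ≤ if |h| ≤ r then A |h| else B |h|) :
    |∫ h, g h| ≤ 2 * ((∫ t in Ioc 0 r, A t) + ∫ t in Ioi r, B t) := by
  set G : ℝ → ℝ := fun t => if t ≤ r then A t else B t
  have hGA : EqOn G A (Ioc 0 r) := fun t ht => if_pos ht.2
  have hGB : EqOn G B (Ioi r) := fun t ht => if_neg (not_le.2 ht)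
  have hGA' : IntegrableOn G (Ioc 0 r) := hA.congr_fun hGA.symm measurableSet_Ioc
  have hGB' : IntegrableOn G (Ioi r) := hB.congr_fun hGB.symm measurableSet_Ioi
  calc |∫ h, g h| ≤ ∫ h, |g h| := abs_integral_le_integral_abs
    _ ≤ ∫ h, G |h| := by
      refine integral_mono_of_nonneg (ae_of_all _ fun h => abs_nonneg _)
        (integrable_comp_abs ?_) (ae_of_all _ hg)
      rw [← Ioc_union_Ioi_eq_Ioi hr]
      exact hGA'.union hGB'
    _ = 2 * ∫ t in Ioi 0, G t := integral_comp_abs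
    _ = 2 * ((∫ t in Ioc 0 r, A t) + ∫ t in Ioi r, B t) := by
      rw [← Ioc_union_Ioi_eq_Ioi hr, setIntegral_union (Ioc_disjoint_Ioi le_rfl)
        measurableSet_Ioi hGA' hGB', setIntegral_congr_fun measurableSet_Ioc hGA,
        setIntegral_congr_fun measurableSet_Ioi hGB]

theorem integrableOn_Ioc_zero_one_rpow {s : ℝ} (hs : -1 < s) :
    IntegrableOn (fun t : ℝ => t ^ s) (Ioc 0 1) :=
  (intervalIntegrable_iff_integrableOn_Ioc_of_le zero_le_one).1
    (intervalIntegral.intervalIntegrable_rpow' hs)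

theorem integral_Ioc_zero_one_rpow {s : ℝ} (hs : -1 < s) :
    ∫ t in Ioc (0 : ℝ) 1, t ^ s = 1 / (s + 1) := by
  rw [← intervalIntegral.integral_of_le zero_le_one, integral_rpow (Or.inl hs),
    zero_rpow (by linarith), one_rpow, sub_zero]

theorem abs_div_rpow_le_mul_rpow {a K p q t : ℝ} (hK : 0 ≤ K) (ht : 0 ≤ t) (hq : q ≠ 0)
    (ha : |a| ≤ K * t ^ p) : |a / t ^ q| ≤ K * t ^ (p - q) := by
  rcases ht.eq_or_lt with rfl | ht
  · rw [zero_rpow hq, div_zero, abs_zero]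
    exact mul_nonneg hK (rpow_nonneg le_rfl _)
  rw [abs_div, abs_of_pos (rpow_pos_of_pos ht q), div_le_iff₀ (rpow_pos_of_pos ht q),
    mul_assoc, ← rpow_add ht, sub_add_cancel]
  exact ha

noncomputable def DalphaIntegrand (α : ℝ) (f : ℝ → ℝ) (x h : ℝ) : ℝ :=
  (f (x + h) - f x - (if |h| ≤ 1 then deriv f x * h else 0)) / |h| ^ (1 + α)

section Dalpha

variable {f : ℝ → ℝ} {α L : ℝ}

theorem abs_Dalpha_le_of_deriv_deriv {f' f'' : ℝ → ℝ} {M : ℝ} (hα0 : 0 < α)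
    (hα2 : α < 2) (hf : ∀ y, HasDerivAt f (f' y) y) (hf' : ∀ y, HasDerivAt f' (f'' y) y)
    (hM : ∀ y, |f'' y| ≤ M) (hL : ∀ y z, |f y - f z| ≤ L) (x : ℝ) :
    |Dalpha α f x| ≤ M / (2 - α) + 2 * L / α := by
  have hM0 : 0 ≤ M := (abs_nonneg _).trans (hM 0)
  have hL0 : 0 ≤ L := by simpa using hL 0 0
  have hq : 1 + α ≠ 0 := by linarith
  have hbound : ∀ h, |DalphaIntegrand α f x h| ≤
      if |h| ≤ 1 then M / 2 * |h| ^ (1 - α) else L * |h| ^ (-(1 + α)) := by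
    intro h
    rw [DalphaIntegrand, (hf x).deriv]
    split_ifs
    · rw [show 1 - α = 2 - (1 + α) by ring]
      refine abs_div_rpow_le_mul_rpow (by positivity) (abs_nonneg h) hq ?_
      simpa [rpow_two] using abs_sub_sub_mul_le_of_deriv_deriv hf hf' hM x h
    · rw [sub_zero, show -(1 + α) = 0 - (1 + α) by ring]
      exact abs_div_rpow_le_mul_rpow hL0 (abs_nonneg h) hq (by simpa using hL (x + h) x)
  calc |Dalpha α f x|
      ≤ 2 * ((∫ t in Ioc 0 1, M / 2 * t ^ (1 - α)) + ∫ t in Ioi 1, L * t ^ (-(1 + α))) :=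
        abs_integral_le_of_abs_le_ite zero_le_one
          ((integrableOn_Ioc_zero_one_rpow (by linarith)).const_mul _)
          ((integrableOn_Ioi_rpow_of_lt (by linarith) one_pos).const_mul _) hbound
    _ = M / (2 - α) + 2 * L / α := by
      rw [integral_const_mul, integral_const_mul, integral_Ioc_zero_one_rpow (by linarith),
        integral_Ioi_rpow_of_lt (by linarith) one_pos, one_rpow, show 1 - α + 1 = 2 - α by ring,
        show -(1 + α) + 1 = -α by ring]
      field_simp [hα0.ne', (sub_pos.2 hα2).ne']

theorem abs_Dalpha_le_of_eq_zero_near {r x : ℝ} (hα0 : 0 < α) (hr : 0 < r)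
    (hL : ∀ y, |f y| ≤ L) (hzero : ∀ h, |h| ≤ r → f (x + h) = 0) :
    |Dalpha α f x| ≤ 2 * L / (α * r ^ α) := by
  have hL0 : 0 ≤ L := (abs_nonneg _).trans (hL 0)
  have hfx : f x = 0 := by simpa using hzero 0 (by simpa using hr.le)
  have hdx : deriv f x = 0 := by
    have : f =ᶠ[𝓝 x] fun _ => 0 := by
      filter_upwards [Metric.closedBall_mem_nhds x hr] with y hy
      simpa using hzero (y - x) (by rwa [← Real.dist_eq])
    rw [this.deriv_eq, deriv_const]
  have hbound : ∀ h, |DalphaIntegrand α f x h| ≤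
      if |h| ≤ r then 0 else L * |h| ^ (-(1 + α)) := by
    intro h
    simp only [DalphaIntegrand, hfx, hdx, zero_mul, ite_self, sub_zero]
    split_ifs with hh
    · simp [hzero h hh]
    · rw [show -(1 + α) = 0 - (1 + α) by ring]
      exact abs_div_rpow_le_mul_rpow hL0 (abs_nonneg h) (by linarith)
        (by simpa using hL (x + h))
  calc |Dalpha α f x|
      ≤ 2 * ((∫ _ in Ioc 0 r, (0 : ℝ)) + ∫ t in Ioi r, L * t ^ (-(1 + α))) :=
        abs_integral_le_of_abs_le_ite hr.le integrableOn_zero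
          ((integrableOn_Ioi_rpow_of_lt (by linarith) hr).const_mul _) hbound
    _ = 2 * L / (α * r ^ α) := by
      rw [integral_zero, integral_const_mul, integral_Ioi_rpow_of_lt (by linarith) hr,
        show -(1 + α) + 1 = -α by ring, rpow_neg hr.le]
      field_simp [hα0.ne', (rpow_pos_of_pos hr α).ne']
      ring

end Dalpha

theorem stmt12 (α : ℝ) (hα1 : 0 < α) (hα2 : α < 2) :
    ∀ n m : ℕ, 2 ≤ n → 2 ≤ m → m ≤ n → ∀ x : ℝ,
      |Dalpha α (fn n) x| ≤
        ((⨆ u : Set.Icc (0 : ℝ) 1, |deriv (deriv psi) (u : ℝ)|) / (2 - α) + 2 / α)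
            * fn (n - m) x
          + 2 / (α * ((m : ℝ) - 1) ^ α) := by
  intro n m hn hm hmn x
  obtain ⟨k, rfl⟩ : ∃ k, n = k + 1 := ⟨n - 1, by omega⟩
  set M := ⨆ u : Set.Icc (0 : ℝ) 1, |deriv (deriv psi) (u : ℝ)|
  have hM : ∀ u ∈ Icc (0 : ℝ) 1, |psi'' u| ≤ M := fun u hu => abs_psi''_le_iSup hu
  have hm1 : (0 : ℝ) < m - 1 := by
    have : (2 : ℝ) ≤ m := mod_cast hm
    linarith
  have hmain : 0 ≤ (M / (2 - α) + 2 / α) * fn (k + 1 - m) x :=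
    mul_nonneg (add_nonneg (div_nonneg ((abs_nonneg _).trans (hM 0 ⟨le_rfl, zero_le_one⟩))
      (by linarith)) (by positivity)) (fn_mem_Icc _ x).1
  have htail : 0 ≤ 2 / (α * ((m : ℝ) - 1) ^ α) := by positivity
  by_cases hx : ((k + 1 - m : ℕ) : ℝ) ≤ |x|
  · obtain ⟨f', f'', hf, hf', hf''⟩ := exists_hasDerivAt_fn_succ k hM
    have := abs_Dalpha_le_of_deriv_deriv hα1 hα2 hf hf' hf''
      (fun y z => abs_sub_le_of_le_of_le (fn_mem_Icc _ y).1 (fn_mem_Icc _ y).2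
        (fn_mem_Icc _ z).1 (fn_mem_Icc _ z).2) x
    rw [fn_eq_one_of_le_abs hx]
    linarith
  · -- `f_n` vanishes on `[-(n-1), n-1]`, which contains the ball of radius `m - 1` around `x`
    rw [Nat.cast_sub hmn, not_le] at hx
    push_cast at hx
    have := abs_Dalpha_le_of_eq_zero_near hα1 hm1
      (fun y => abs_le.2 ⟨by linarith [(fn_mem_Icc (k + 1) y).1], (fn_mem_Icc _ y).2⟩)
      fun h _ => fn_succ_eq_zero_of_abs_le (by linarith [abs_add_le x h])
    linarith
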